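/- arXiv:1802.07397 — 5 statements merged into one kernel-verified Lean document; each statement's English description precedes it below -/
import Mathlib

section
/- Let (X, ≼₁) and (X, ≼₂) be WQOs with conjunction ≼. A subset I ⊆ X is an ideal of (X, ≼) if and only if I can be written as I = I₁ ∩ I₂ where each Iₛ is an ideal of (X, ≼ₛ) and there exists a ≼-directed set D ⊆ I with Iₛ equal to the ≼ₛ-downward closure of D for s = 1, 2. -/
/-- A quasi-order that is a well-quasi-ordering. -/
def IsWQO {X : Type*} (r : X → X → Prop) : Prop :=
  Reflexive r ∧ Transitive r ∧ ∀ f : ℕ → X, ∃ i j : ℕ, i < j ∧ r (f i) (f j)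

/-- Downward closed set with respect to `r`. -/
def DownClosed {X : Type*} (r : X → X → Prop) (S : Set X) : Prop :=
  ∀ ⦃x y : X⦄, r x y → y ∈ S → x ∈ S

/-- A set is `r`-directed: any two elements have a common upper bound in it. -/
def DirectedSet {X : Type*} (r : X → X → Prop) (S : Set X) : Prop :=
  ∀ x ∈ S, ∀ y ∈ S, ∃ z ∈ S, r x z ∧ r y z

/-- An ideal: nonempty, downward closed and directed. -/
def IsIdeal {X : Type*} (r : X → X → Prop) (I : Set X) : Prop :=
  I.Nonempty ∧ DownClosed r I ∧ DirectedSet r I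

/-- Downward closure of a set with respect to `r`. -/
def dcl {X : Type*} (r : X → X → Prop) (S : Set X) : Set X :=
  {x | ∃ y ∈ S, r x y}

/-! For a set `D` directed under the conjunction `≼`, the intersection of its `≼₁`- and
`≼₂`-downward closures is its `≼`-downward closure: an element below `c ∈ D` in `≼₁` and below
`d ∈ D` in `≼₂` is `≼`-below a common upper bound of `c` and `d` in `D`. Taking `D = I` gives the
forward direction; conversely, the `≼`-downward closure of a nonempty `≼`-directed set is a
`≼`-ideal. -/

section QuasiOrder

variable {X : Type*} {r r₁ r₂ : X → X → Prop} {S I : Set X}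

theorem IsWQO.reflexive (h : IsWQO r) : Reflexive r := h.1

theorem IsWQO.transitive (h : IsWQO r) : Transitive r := h.2.1

theorem Reflexive.and (h₁ : Reflexive r₁) (h₂ : Reflexive r₂) :
    Reflexive fun x y => r₁ x y ∧ r₂ x y :=
  fun x => ⟨h₁ x, h₂ x⟩

theorem Transitive.and (h₁ : Transitive r₁) (h₂ : Transitive r₂) :
    Transitive fun x y => r₁ x y ∧ r₂ x y :=
  fun _ _ _ hxy hyz => ⟨h₁ hxy.1 hyz.1, h₂ hxy.2 hyz.2⟩

theorem DirectedSet.mono {r' : X → X → Prop} (hrr' : ∀ x y, r x y → r' x y)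
    (hS : DirectedSet r S) : DirectedSet r' S := by
  intro x hx y hy
  obtain ⟨z, hz, hxz, hyz⟩ := hS x hx y hy
  exact ⟨z, hz, hrr' x z hxz, hrr' y z hyz⟩

theorem subset_dcl (hr : Reflexive r) : S ⊆ dcl r S :=
  fun x hx => ⟨x, hx, hr x⟩

theorem Set.Nonempty.of_dcl (h : (dcl r S).Nonempty) : S.Nonempty :=
  let ⟨_, y, hy, _⟩ := h; ⟨y, hy⟩

theorem downClosed_dcl (hr : Transitive r) : DownClosed r (dcl r S) := by
  rintro x y hxy ⟨z, hz, hyz⟩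
  exact ⟨z, hz, hr hxy hyz⟩

theorem DownClosed.dcl_eq (hr : Reflexive r) (hI : DownClosed r I) : dcl r I = I :=
  Set.Subset.antisymm (fun _ ⟨_, hy, hxy⟩ => hI hxy hy) (subset_dcl hr)

theorem directedSet_dcl (hr : Reflexive r) (hr' : Transitive r) (hS : DirectedSet r S) :
    DirectedSet r (dcl r S) := by
  rintro x ⟨a, ha, hxa⟩ y ⟨b, hb, hyb⟩
  obtain ⟨z, hz, haz, hbz⟩ := hS a ha b hb
  exact ⟨z, subset_dcl hr hz, hr' hxa haz, hr' hyb hbz⟩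

theorem isIdeal_dcl (hr : Reflexive r) (hr' : Transitive r) (hne : S.Nonempty)
    (hS : DirectedSet r S) : IsIdeal r (dcl r S) :=
  ⟨hne.mono (subset_dcl hr), downClosed_dcl hr', directedSet_dcl hr hr' hS⟩

theorem DirectedSet.dcl_inter_dcl (h₁ : Transitive r₁) (h₂ : Transitive r₂)
    (hD : DirectedSet (fun x y => r₁ x y ∧ r₂ x y) S) :
    dcl r₁ S ∩ dcl r₂ S = dcl (fun x y => r₁ x y ∧ r₂ x y) S := by
  apply Set.Subset.antisymm
  · rintro x ⟨⟨c, hc, hxc⟩, d, hd, hxd⟩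
    obtain ⟨z, hz, hcz, hdz⟩ := hD c hc d hd
    exact ⟨z, hz, h₁ hxc hcz.1, h₂ hxd hdz.2⟩
  · rintro x ⟨z, hz, hxz₁, hxz₂⟩
    exact ⟨⟨z, hz, hxz₁⟩, z, hz, hxz₂⟩

end QuasiOrder

theorem conjunction_ideals {X : Type*} (r₁ r₂ : X → X → Prop)
    (h₁ : IsWQO r₁) (h₂ : IsWQO r₂) (I : Set X) :
    IsIdeal (fun x y => r₁ x y ∧ r₂ x y) I ↔
      ∃ I₁ I₂ : Set X, IsIdeal r₁ I₁ ∧ IsIdeal r₂ I₂ ∧ I = I₁ ∩ I₂ ∧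
        ∃ D : Set X, D ⊆ I ∧ DirectedSet (fun x y => r₁ x y ∧ r₂ x y) D ∧
          I₁ = dcl r₁ D ∧ I₂ = dcl r₂ D := by
  have refl := h₁.reflexive.and h₂.reflexive
  have trans := h₁.transitive.and h₂.transitive
  constructor
  · rintro ⟨hne, hdown, hdir⟩
    refine ⟨dcl r₁ I, dcl r₂ I,
      isIdeal_dcl h₁.reflexive h₁.transitive hne (hdir.mono fun _ _ h => h.1),
      isIdeal_dcl h₂.reflexive h₂.transitive hne (hdir.mono fun _ _ h => h.2), ?_,
      I, subset_rfl, hdir, rfl, rfl⟩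
    rw [hdir.dcl_inter_dcl h₁.transitive h₂.transitive, hdown.dcl_eq refl]
  · rintro ⟨_, _, ⟨hne, -⟩, -, rfl, D, -, hdir, rfl, rfl⟩
    rw [hdir.dcl_inter_dcl h₁.transitive h₂.transitive]
    exact isIdeal_dcl refl trans hne.of_dcl hdir
end

section
/- Let (X, ≼) be a WQO and I₁, …, Iₙ ideals with L ⊆ I₁ ∪ ⋯ ∪ Iₙ and Iᵢ ⊄ Iⱼ for i ≠ j. Then Iᵢ is contained in the downward closure of L if and only if Iᵢ is contained in the downward closure of L ∩ Iᵢ. -/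
theorem dcl_mono {X : Type*} (r : X → X → Prop) {S T : Set X} (h : S ⊆ T) :
    dcl r S ⊆ dcl r T :=
  fun _ ⟨y, hy, hxy⟩ => ⟨y, h hy, hxy⟩

theorem DirectedSet.exists_forall_rel {X : Type*} {r : X → X → Prop} [IsTrans X r] {S : Set X}
    (hd : DirectedSet r S) (hne : S.Nonempty) {κ : Type*} [Finite κ] (f : κ → X)
    (hf : ∀ k, f k ∈ S) : ∃ z ∈ S, ∀ k, r (f k) z := by
  have : Nonempty S := hne.to_subtype
  obtain ⟨z, hz⟩ := (directedOn_iff_directed.mp hd).finite_le fun k => (⟨f k, hf k⟩ : S)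
  exact ⟨z, z.2, hz⟩

/-- Pick a witness of `I i ⊄ I j` for each `j ≠ i` and go above all of them and `x` inside `I i`;
an element of `I j` above that bound would drag the witness into the down-closed `I j`. -/
theorem exists_rel_notMem_dcl_of_not_subset {X : Type*} {r : X → X → Prop} [IsTrans X r]
    {ι : Type*} [Finite ι] {I : ι → Set X} (hdc : ∀ j, DownClosed r (I j)) {i : ι}
    (hdir : DirectedSet r (I i)) (hinc : ∀ j, i ≠ j → ¬ I i ⊆ I j) {x : X} (hx : x ∈ I i) :
    ∃ z ∈ I i, r x z ∧ ∀ j, i ≠ j → z ∉ dcl r (I j) := by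
  have hwit (j : {j // i ≠ j}) : ∃ a ∈ I i, a ∉ I j := Set.not_subset.mp (hinc j j.2)
  choose a ha hna using hwit
  obtain ⟨z, hzI, hz⟩ :=
    hdir.exists_forall_rel ⟨x, hx⟩ (fun o => o.elim x a) (Option.rec hx ha)
  refine ⟨z, hzI, hz none, fun j hij ⟨y, hyj, hzy⟩ => hna ⟨j, hij⟩ ?_⟩
  exact hdc j (hz (some ⟨j, hij⟩)) (hdc j hzy hyj)

theorem inclusion_vs_adherence {X : Type*} (r : X → X → Prop) (h : IsWQO r)
    {n : ℕ} (I : Fin n → Set X) (hI : ∀ i, IsIdeal r (I i))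
    (L : Set X) (hL : L ⊆ ⋃ i, I i)
    (hinc : ∀ i j, i ≠ j → ¬ I i ⊆ I j) (i : Fin n) :
    I i ⊆ dcl r L ↔ I i ⊆ dcl r (L ∩ I i) := by
  have : IsTrans X r := ⟨h.2.1⟩
  refine ⟨fun hsub x hx => ?_, fun hsub => hsub.trans (dcl_mono r Set.inter_subset_left)⟩
  obtain ⟨z, hzI, hxz, hz⟩ :=
    exists_rel_notMem_dcl_of_not_subset (fun j => (hI j).2.1) (hI i).2.2 (hinc i) hx
  obtain ⟨y, hyL, hzy⟩ := hsub hzI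
  obtain ⟨j, hyj⟩ := Set.mem_iUnion.mp (hL hyL)
  obtain rfl : i = j := by_contra fun hij => hz j hij ⟨y, hyj, hzy⟩
  exact ⟨y, ⟨hyL, hyj⟩, h.2.1 hxz hzy⟩
end

section
/- For any word v over alphabet Σ whose length is a multiple of d, the ⊑_d-downward closure of v* equals the set of words w of length divisible by d such that for every position i, every letter occurring in w at a position congruent to i modulo d also occurs in v at some position congruent to i modulo d. -/
/-- `kappa d w i` is the set of letters occurring in `w` at (1-based) positions
congruent to `i` modulo `d`. -/
def kappa {A : Type*} (d : ℕ) (w : List A) (i : ℕ) : Set A :=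
  {a | ∃ p : ℕ, w[p]? = some a ∧ (p + 1) % d = i % d}

/-- `ModEmb d u v` : `u` embeds into `v` by a strictly monotone, letter-preserving
map that preserves positions modulo `d`, and `|u| ≡ |v| (mod d)`. -/
def ModEmb {A : Type*} (d : ℕ) (u v : List A) : Prop :=
  u.length % d = v.length % d ∧
    ∃ α : Fin u.length → Fin v.length, StrictMono α ∧
      (∀ i, u.get i = v.get (α i)) ∧
      (∀ i : Fin u.length, ((α i : ℕ)) % d = ((i : ℕ)) % d)

/-- Downward closure of a set of words with respect to `ModEmb d`. -/
def dclMod {A : Type*} (d : ℕ) (S : Set (List A)) : Set (List A) :=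
  {u | ∃ v ∈ S, ModEmb d u v}

/-- The `k`-th power of a word. -/
def wpow {A : Type*} (v : List A) (k : ℕ) : List A :=
  (List.replicate k v).flatten

/-- `π_d(v)`: the smallest `t ≥ 1` dividing `d` such that
`κ_d(v)(i + t) = κ_d(v)(i)` for all `i ∈ [1, d - t]`. -/
noncomputable def piD {A : Type*} (d : ℕ) (v : List A) : ℕ :=
  sInf {t | t ∣ d ∧ 1 ≤ t ∧ ∀ i : ℕ, 1 ≤ i → i + t ≤ d →
    kappa d v (i + t) = kappa d v i}

/-! A word `w` with `κ_d(w) ⊆ κ_d(v)` embeds into `v ^ |w|`: the letter at position `p` of `w` is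
read off the `p`-th copy of `v`, at a position congruent to `p` modulo `d`. Since `d ∣ |v|`, every
copy of `v` starts at a multiple of `d`, so this embedding respects positions modulo `d`, and
conversely any position of a power of `v` carries a letter of `v` in the same residue class. -/

section

variable {A : Type*}

lemma wpow_succ (v : List A) (k : ℕ) : wpow v (k + 1) = v ++ wpow v k := by
  simp [wpow, List.replicate_succ]

lemma length_wpow (v : List A) (k : ℕ) : (wpow v k).length = k * v.length := by
  simp [wpow]

lemma getElem?_wpow {v : List A} {k p : ℕ} (hp : p < k * v.length) :
    (wpow v k)[p]? = v[p % v.length]? := by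
  induction k generalizing p with
  | zero => simp at hp
  | succ k ih =>
    rw [wpow_succ]
    by_cases h : p < v.length
    · rw [List.getElem?_append_left h, Nat.mod_eq_of_lt h]
    · rw [List.getElem?_append_right (Nat.le_of_not_lt h), ih (by rw [Nat.succ_mul] at hp; omega),
        ← Nat.mod_eq_sub_mod (Nat.le_of_not_lt h)]

lemma mem_kappa_iff {d : ℕ} {w : List A} {i : ℕ} {a : A} :
    a ∈ kappa d w i ↔ ∃ p, ∃ hp : p < w.length, w[p] = a ∧ (p + 1) % d = i % d := by
  simp only [kappa, Set.mem_ofPred_eq, List.getElem?_eq_some_iff]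
  grind

lemma kappa_wpow_subset {d : ℕ} {v : List A} (hv : d ∣ v.length) (k i : ℕ) :
    kappa d (wpow v k) i ⊆ kappa d v i := by
  rintro a ⟨p, hpa, hpi⟩
  have hp : p < k * v.length := length_wpow v k ▸ (List.getElem?_eq_some_iff.1 hpa).1
  refine ⟨p % v.length, getElem?_wpow hp ▸ hpa, ?_⟩
  rw [← hpi, Nat.add_mod, Nat.mod_mod_of_dvd p hv, ← Nat.add_mod]

namespace ModEmb

variable {d : ℕ} {u v : List A}

lemma dvd_length (h : ModEmb d u v) (hv : d ∣ v.length) : d ∣ u.length := by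
  rw [Nat.dvd_iff_mod_eq_zero] at hv ⊢
  exact h.1.trans hv

lemma kappa_subset (h : ModEmb d u v) (i : ℕ) : kappa d u i ⊆ kappa d v i := by
  obtain ⟨-, α, -, hget, hmod⟩ := h
  intro a ha
  obtain ⟨p, hp, rfl, hpi⟩ := mem_kappa_iff.1 ha
  refine mem_kappa_iff.2 ⟨α ⟨p, hp⟩, (α ⟨p, hp⟩).2, (hget ⟨p, hp⟩).symm, ?_⟩
  rw [← hpi]
  exact Nat.ModEq.add_right 1 (hmod ⟨p, hp⟩)

end ModEmb

lemma modEmb_wpow {d : ℕ} {v w : List A} (hv : d ∣ v.length) (hw : d ∣ w.length)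
    (h : ∀ p (hp : p < w.length), ∃ q, ∃ hq : q < v.length, v[q] = w[p] ∧ q % d = p % d) :
    ModEmb d w (wpow v w.length) := by
  choose q hq hqw hqp using h
  have hlt {p p' : ℕ} (hpp' : p < p') (hp : p < w.length) :
      p * v.length + q p hp < p' * v.length := by
    have := hq p hp
    calc p * v.length + q p hp < (p + 1) * v.length := by rw [Nat.succ_mul]; omega
      _ ≤ p' * v.length := Nat.mul_le_mul_right _ hpp'
  have hbound (p : Fin w.length) : p * v.length + q p p.2 < (wpow v w.length).length := by
    rw [length_wpow]
    exact hlt p.2 p.2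
  refine ⟨?_, fun p ↦ ⟨p * v.length + q p p.2, hbound p⟩, ?_, ?_, ?_⟩
  · rw [length_wpow, Nat.mod_eq_zero_of_dvd hw, Nat.mod_eq_zero_of_dvd (hv.mul_left _)]
  · intro p p' hpp'
    exact Fin.mk_lt_mk.2 ((hlt hpp' p.2).trans_le (Nat.le_add_right _ _))
  · intro p
    have hget := getElem?_wpow (hlt p.2 p.2)
    rw [Nat.mul_add_mod_of_lt (hq p p.2), List.getElem?_eq_getElem (hq p p.2),
      List.getElem?_eq_getElem (hbound p), Option.some_inj, hqw] at hget
    exact hget.symm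
  · intro p
    rw [Nat.add_mod, Nat.mod_eq_zero_of_dvd (hv.mul_left _), Nat.zero_add, Nat.mod_mod, hqp]

lemma exists_getElem_eq_of_kappa_subset {d : ℕ} (hd : d ≠ 0) {v w : List A}
    (h : ∀ i ∈ Finset.Icc 1 d, kappa d w i ⊆ kappa d v i) (p : ℕ) (hp : p < w.length) :
    ∃ q, ∃ hq : q < v.length, v[q] = w[p] ∧ q % d = p % d := by
  have hi : p % d + 1 ∈ Finset.Icc 1 d := by
    have := Nat.mod_lt p (Nat.pos_of_ne_zero hd)
    rw [Finset.mem_Icc]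
    omega
  have hwp : w[p] ∈ kappa d w (p % d + 1) := mem_kappa_iff.2 ⟨p, hp, rfl, by rw [Nat.mod_add_mod]⟩
  obtain ⟨q, hq, hqp, hqi⟩ := mem_kappa_iff.1 (h _ hi hwp)
  rw [Nat.mod_add_mod] at hqi
  exact ⟨q, hq, hqp, Nat.ModEq.add_right_cancel' 1 hqi⟩

end

theorem dcl_star_charact_general {A : Type*} (d : ℕ) (v : List A)
    (hv : d ∣ v.length) :
    dclMod d {w | ∃ k : ℕ, w = wpow v k} =
      {w | d ∣ w.length ∧ ∀ i ∈ Finset.Icc 1 d, kappa d w i ⊆ kappa d v i} := by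
  ext w
  constructor
  · rintro ⟨_, ⟨k, rfl⟩, hemb⟩
    refine ⟨hemb.dvd_length ?_, fun i _ ↦ (hemb.kappa_subset i).trans (kappa_wpow_subset hv k i)⟩
    rw [length_wpow]
    exact hv.mul_left k
  · rintro ⟨hw, hsub⟩
    refine ⟨_, ⟨w.length, rfl⟩, modEmb_wpow hv hw fun p hp ↦ ?_⟩
    have hd : d ≠ 0 := by
      rintro rfl
      rw [zero_dvd_iff] at hw
      omega
    exact exists_getElem_eq_of_kappa_subset hd hsub p hp

theorem dcl_star_charact {A : Type*} (d : ℕ) (hd : 1 ≤ d) (v : List A)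
    (hv : d ∣ v.length) :
    dclMod d {w | ∃ k : ℕ, w = wpow v k} =
      {w | d ∣ w.length ∧ ∀ i ∈ Finset.Icc 1 d, kappa d w i ⊆ kappa d v i} :=
  dcl_star_charact_general d v hv
end

section
/- If κ_d(xyz)(i) ⊆ κ_d(v)(i) for all i ∈ {1,…,d} and the period π_d(v) divides |y|, then κ_d(xyyz)(i) ⊆ κ_d(v)(i) for all i ∈ {1,…,d}. -/
/-!
Each `κ_d(w)` is `d`-periodic in `i`; since `π_d(v) ∣ d`, the defining property of `π_d(v)` on
one block `[1, d]` then makes `κ_d(v)` periodic with period `π_d(v)` on all of `ℕ`.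
A letter of `xyyz` either sits in the prefix `xy`, where it is a letter of `xyz` at the same
position, or it is a letter of `xyz` shifted right by `|y|`; since `π_d(v) ∣ |y|`, that shift
does not change the class of `κ_d(v)` the letter has to lie in.
-/

open Function

section Periodicity

variable {β : Type*} {f : ℕ → β} {d t : ℕ}

theorem periodic_of_forall_add_lt (hf : Periodic f d) (hd : 0 < d) (htd : t ∣ d)
    (h : ∀ i, i + t < d → f (i + t) = f i) : Periodic f t := by
  have ht : 0 < t := Nat.pos_of_dvd_of_pos htd hd
  have hmod : ∀ i < d, f i = f (i % t) := by
    intro i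
    induction i using Nat.strong_induction_on with
    | _ i ih =>
      intro hi
      rcases lt_or_ge i t with hit | hti
      · rw [Nat.mod_eq_of_lt hit]
      · have hshift : i - t + t = i := Nat.sub_add_cancel hti
        rw [← hshift, h _ (by omega), ih _ (by omega) (by omega), Nat.add_mod_right]
  intro i
  calc f (i + t) = f ((i + t) % d % t) := by rw [← hmod _ (Nat.mod_lt _ hd), hf.map_mod_nat]
    _ = f (i % d % t) := by rw [Nat.mod_mod_of_dvd _ htd, Nat.mod_mod_of_dvd _ htd,
        Nat.add_mod_right]
    _ = f i := by rw [← hmod _ (Nat.mod_lt _ hd), hf.map_mod_nat]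

theorem periodic_of_forall_one_le_of_add_le (hf : Periodic f d) (hd : 0 < d) (htd : t ∣ d)
    (h : ∀ i, 1 ≤ i → i + t ≤ d → f (i + t) = f i) : Periodic f t := by
  have hshift : Periodic (fun i => f (i + 1)) t :=
    periodic_of_forall_add_lt (fun i => by simp only [add_right_comm i d 1, hf _]) hd htd
      (fun i hi => by simpa only [add_right_comm i t 1] using h (i + 1) (by omega) (by omega))
  intro i
  have key := hshift (i + d - 1)
  simp only [show i + d - 1 + t + 1 = i + t + d by omega, show i + d - 1 + 1 = i + d by omega,
    hf _] at key
  exact key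

end Periodicity

section Kappa

variable {A : Type*} {d : ℕ}

theorem kappa_congr (w : List A) {i j : ℕ} (hij : i ≡ j [MOD d]) : kappa d w i = kappa d w j := by
  simp only [kappa, show i % d = j % d from hij]

theorem kappa_periodic (d : ℕ) (w : List A) : Periodic (kappa d w) d :=
  fun _ => kappa_congr w Nat.add_modEq_right

theorem kappa_periodic_piD (hd : 0 < d) (v : List A) : Periodic (kappa d v) (piD d v) := by
  obtain ⟨htd, -, hper⟩ : piD d v ∈ _ := Nat.sInf_mem ⟨d, dvd_rfl, hd, fun i _ _ => by omega⟩
  exact periodic_of_forall_one_le_of_add_le (kappa_periodic d v) hd htd hper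

theorem kappa_subset_of_forall_mem_Icc (hd : 0 < d) {u v : List A}
    (h : ∀ i ∈ Finset.Icc 1 d, kappa d u i ⊆ kappa d v i) (i : ℕ) : kappa d u i ⊆ kappa d v i := by
  rw [← (kappa_periodic d u).map_mod_nat, ← (kappa_periodic d v).map_mod_nat]
  rcases Nat.eq_zero_or_pos (i % d) with h0 | hpos
  · rw [h0, ← kappa_periodic d u 0, ← kappa_periodic d v 0, zero_add]
    exact h d (Finset.mem_Icc.mpr ⟨hd, le_rfl⟩)
  · exact h _ (Finset.mem_Icc.mpr ⟨hpos, (Nat.mod_lt _ hd).le⟩)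

theorem mem_kappa_of_mem_kappa_append_dup {x y z : List A} {i : ℕ} {a : A}
    (ha : a ∈ kappa d (x ++ y ++ y ++ z) i) :
    a ∈ kappa d (x ++ y ++ z) i ∨
      ∃ j, a ∈ kappa d (x ++ y ++ z) j ∧ j + y.length ≡ i [MOD d] := by
  obtain ⟨p, hget, hmod⟩ := ha
  rw [List.append_assoc (x ++ y)] at hget
  rcases lt_or_ge p (x ++ y).length with hp | hp
  · left
    refine ⟨p, ?_, hmod⟩
    rwa [List.getElem?_append_left hp, ← List.getElem?_append_left hp] at hget
  · right
    have hxy : x.length + y.length ≤ p := by simpa only [List.length_append] using hp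
    refine ⟨p - y.length + 1, ⟨p - y.length, ?_, rfl⟩, ?_⟩
    · rw [List.getElem?_append_right hp] at hget
      rw [List.append_assoc, List.getElem?_append_right (by omega)]
      convert hget using 2
      simp only [List.length_append]
      omega
    · rw [Nat.ModEq, ← hmod]
      congr 1
      omega

end Kappa

theorem insert_periodic {A : Type*} (d : ℕ) (hd : 1 ≤ d) (x y z v : List A)
    (h : ∀ i ∈ Finset.Icc 1 d, kappa d (x ++ y ++ z) i ⊆ kappa d v i)
    (hp : piD d v ∣ y.length) :
    ∀ i ∈ Finset.Icc 1 d, kappa d (x ++ y ++ y ++ z) i ⊆ kappa d v i := by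
  have hxyz := kappa_subset_of_forall_mem_Icc hd h
  obtain ⟨c, hc⟩ := hp
  have hy : Periodic (kappa d v) y.length := by
    simpa only [hc, mul_comm, Nat.cast_id] using (kappa_periodic_piD hd v).nat_mul c
  intro i _ a ha
  rcases mem_kappa_of_mem_kappa_append_dup ha with ha | ⟨j, ha, hj⟩
  · exact hxyz i ha
  · rw [← kappa_congr v hj, hy]
    exact hxyz j ha
end

section
/- Let S = {≼₁, ≼₂} be two WQOs on Σ* and let ≼ be their conjunction. A language L ⊆ Σ* is a Boolean combination of upward closures of single words with respect to ≼₁ or ≼₂ if and only if L is a Boolean combination of upward closures of single words with respect to ≼. -/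
/-- Finite Boolean combinations (union, intersection, complement) of a
collection of basic sets. -/
inductive BoolComb {X : Type*} (B : Set (Set X)) : Set X → Prop
  | base {S : Set X} : S ∈ B → BoolComb B S
  | compl {S : Set X} : BoolComb B S → BoolComb B Sᶜ
  | union {S T : Set X} : BoolComb B S → BoolComb B T → BoolComb B (S ∪ T)
  | inter {S T : Set X} : BoolComb B S → BoolComb B T → BoolComb B (S ∩ T)

/-- The upward closure of a single word. -/
def upw {X : Type*} (r : X → X → Prop) (w : X) : Set X := {v | r w v}

/-!
Each `≼`-upward closure is trivially `upw r₁ w ∩ upw r₂ w`. Conversely, `upw rᵢ w` is upward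
closed for the conjunction `≼`, which is again a WQO (Ramsey-type argument, as for products), and
in a WQO every upward-closed set is generated by finitely many words: otherwise one could pick
words forming a bad sequence.
-/

theorem WellQuasiOrdered.and {α : Type*} {r s : α → α → Prop} [IsPreorder α r]
    (hr : WellQuasiOrdered r) (hs : WellQuasiOrdered s) :
    WellQuasiOrdered fun a b => r a b ∧ s a b :=
  fun f => hr.prod hs fun n => (f n, f n)

theorem IsWQO.wellQuasiOrdered {X : Type*} {r : X → X → Prop} (h : IsWQO r) :
    WellQuasiOrdered r :=
  h.2.2

theorem IsWQO.isPreorder {X : Type*} {r : X → X → Prop} (h : IsWQO r) : IsPreorder X r where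
  refl := h.1
  trans _ _ _ := @h.2.1 _ _ _

theorem WellQuasiOrdered.exists_finset_eq_biUnion_upw {X : Type*} {r : X → X → Prop}
    (hr : WellQuasiOrdered r) {U : Set X} (hU : ∀ u v, u ∈ U → r u v → v ∈ U) :
    ∃ F : Finset X, U = ⋃ x ∈ F, upw r x := by
  by_contra! hne
  have hbad : ∀ F : Finset X, (∀ x ∈ F, x ∈ U) → ∃ y ∈ U, ∀ x ∈ F, ¬ r x y := by
    intro F hF
    have hsub : ⋃ x ∈ F, upw r x ⊆ U := Set.iUnion₂_subset fun x hx _ hxy => hU x _ (hF x hx) hxy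
    obtain ⟨y, hyU, hy⟩ := Set.exists_of_ssubset (hsub.ssubset_of_ne (hne F).symm)
    exact ⟨y, hyU, fun x hx hxy => hy (Set.mem_biUnion hx hxy)⟩
  obtain ⟨f, -, hf⟩ := exists_seq_of_forall_finset_exists (· ∈ U) (fun x y => ¬ r x y) hbad
  obtain ⟨i, j, hij, h⟩ := hr f
  exact hf i j hij h

namespace BoolComb

variable {X : Type*} {B C : Set (Set X)}

theorem bind (hB : ∀ S ∈ B, BoolComb C S) {L : Set X} (hL : BoolComb B L) : BoolComb C L := by
  induction hL with
  | base hS => exact hB _ hS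
  | compl _ ih => exact ih.compl
  | union _ _ ih₁ ih₂ => exact ih₁.union ih₂
  | inter _ _ ih₁ ih₂ => exact ih₁.inter ih₂

theorem empty {S : Set X} (hS : S ∈ B) : BoolComb B ∅ := by
  simpa using (base hS).inter (base hS).compl

theorem biUnion {S₀ : Set X} (hS₀ : S₀ ∈ B) (F : Finset X) {g : X → Set X}
    (hg : ∀ x ∈ F, BoolComb B (g x)) : BoolComb B (⋃ x ∈ F, g x) := by
  classical
  induction F using Finset.induction_on with
  | empty => simpa using empty hS₀
  | insert x F _ ih =>
    rw [Finset.set_biUnion_insert]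
    exact (hg x (F.mem_insert_self x)).union (ih fun y hy => hg y (Finset.mem_insert_of_mem hy))

theorem of_upwardClosed {r : X → X → Prop} (hr : WellQuasiOrdered r) [Nonempty X] {U : Set X}
    (hU : ∀ u v, u ∈ U → r u v → v ∈ U) : BoolComb {S | ∃ w, S = upw r w} U := by
  obtain ⟨F, rfl⟩ := hr.exists_finset_eq_biUnion_upw hU
  refine biUnion (S₀ := upw r (Classical.arbitrary X)) ?_ F fun x _ => base ⟨x, rfl⟩
  exact ⟨_, rfl⟩

end BoolComb

theorem sPTL_iff_conjunction_PTL {A : Type*} (r₁ r₂ : List A → List A → Prop)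
    (h₁ : IsWQO r₁) (h₂ : IsWQO r₂) (L : Set (List A)) :
    BoolComb {S | ∃ w : List A, S = upw r₁ w ∨ S = upw r₂ w} L ↔
      BoolComb {S | ∃ w : List A, S = upw (fun u v => r₁ u v ∧ r₂ u v) w} L := by
  have := h₁.isPreorder
  have hr := h₁.wellQuasiOrdered.and h₂.wellQuasiOrdered
  constructor
  · refine BoolComb.bind ?_
    rintro _ ⟨w, rfl | rfl⟩
    · exact BoolComb.of_upwardClosed hr fun _ _ hu huv => h₁.2.1 hu huv.1
    · exact BoolComb.of_upwardClosed hr fun _ _ hu huv => h₂.2.1 hu huv.2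
  · refine BoolComb.bind ?_
    rintro _ ⟨w, rfl⟩
    exact .inter (.base ⟨w, .inl rfl⟩) (.base ⟨w, .inr rfl⟩)
end
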